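/- For all n ≥ 2, the sum of distances d(u,v) over all unordered pairs of distinct vertices {u,v}, summed over all plane trees on n vertices (the total Wiener index of plane trees on n vertices) equals (n-1)·4^(n-2). -/

import Mathlib

/-!
Deleting the edge from the root to its first child splits a plane tree with at least two
vertices into two plane trees `t` and `R` (the inverse operation is `graft`), so the trees with
`m + 2` vertices correspond to the pairs of trees with `a + 1` and `b + 1` vertices, `a + b = m`.
Writing `D` for the total depth, the Wiener index of the grafted tree is
`W t + W R + (D t + |t|) |R| + |t| D R`. Hence the number of trees (a Catalan number), the total
depth and the total Wiener index over all trees of a given size satisfy convolution recurrences.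
Symmetrizing them over the antidiagonal and using `(k + 1) C_k = binom(2k, k)`, induction gives,
for trees with `k + 1` vertices, `2 · (total depth) + binom(2k, k) = 4^k` and
`4 · (total Wiener index) = k · 4^k`.
-/

inductive PlaneTree : Type where
  | node : List PlaneTree → PlaneTree

namespace PlaneTree

mutual
def size : PlaneTree → ℕ
  | .node ts => 1 + sizeList ts
def sizeList : List PlaneTree → ℕ
  | [] => 0
  | t :: ts => size t + sizeList ts
end

mutual
def positions : PlaneTree → List (List ℕ)
  | .node ts => [] :: positionsList 0 ts
def positionsList : ℕ → List PlaneTree → List (List ℕ)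
  | _, [] => []
  | i, t :: ts => (positions t).map (i :: ·) ++ positionsList (i+1) ts
end

mutual
def leafPositions : PlaneTree → List (List ℕ)
  | .node [] => [[]]
  | .node (t :: ts) => leafList 0 (t :: ts)
def leafList : ℕ → List PlaneTree → List (List ℕ)
  | _, [] => []
  | i, t :: ts => (leafPositions t).map (i :: ·) ++ leafList (i+1) ts
end

def isPrefixB : List ℕ → List ℕ → Bool
  | [], _ => true
  | _ :: _, [] => false
  | a :: as, b :: bs => a == b && isPrefixB as bs

def lcpLen : List ℕ → List ℕ → ℕ
  | a :: as, b :: bs => if a = b then 1 + lcpLen as bs else 0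
  | _, _ => 0

/-- number of edges on the path between two vertices given by positions -/
def pathDist (p q : List ℕ) : ℕ :=
  (p.length - lcpLen p q) + (q.length - lcpLen p q)

/-- number of vertical paths (vertex, proper descendant) in a tree -/
def verticalPairs (T : PlaneTree) : ℕ :=
  ((positions T).map (fun q =>
    ((positions T).filter (fun p => p != q && isPrefixB p q)).length)).sum

/-- total number of edges over all vertical paths in a tree -/
def verticalEdges (T : PlaneTree) : ℕ :=
  ((positions T).map (fun q =>
    (((positions T).filter (fun p => p != q && isPrefixB p q)).map
      (fun p => q.length - p.length)).sum)).sum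

/-- number of (unordered) paths between distinct vertices -/
def pathCount (T : PlaneTree) : ℕ := ((positions T).sublistsLen 2).length

/-- Wiener index: sum of distances over unordered pairs of distinct vertices -/
def wiener (T : PlaneTree) : ℕ :=
  (((positions T).sublistsLen 2).map (fun l =>
    match l with
    | [p, q] => pathDist p q
    | _ => 0)).sum

end PlaneTree

open Finset

lemma Finset.Nat.sum_antidiagonal_eq_of_add_swap {n : ℕ} {f g : ℕ × ℕ → ℕ}
    (h : ∀ p ∈ antidiagonal n, f p + f p.swap = g p + g p.swap) :
    ∑ p ∈ antidiagonal n, f p = ∑ p ∈ antidiagonal n, g p := by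
  have symmetrize : ∀ φ : ℕ × ℕ → ℕ,
      2 * ∑ p ∈ antidiagonal n, φ p = ∑ p ∈ antidiagonal n, (φ p + φ p.swap) := fun φ => by
    rw [sum_add_distrib, Nat.sum_antidiagonal_swap (f := φ), two_mul]
  have := (symmetrize f).trans ((sum_congr rfl h).trans (symmetrize g).symm)
  omega

lemma centralBinom_succ_add_two_mul_catalan (k : ℕ) :
    (k + 1).centralBinom + 2 * catalan k = 4 * k.centralBinom := by
  refine Nat.eq_of_mul_eq_mul_left (by omega : 0 < k + 1) ?_
  linear_combination Nat.succ_mul_centralBinom_succ k + 2 * succ_mul_catalan_eq_centralBinom k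

/- With `C` and `B = (1 - 4x)^(-1/2)` the generating functions of `catalan` and `centralBinom`,
the next two lemmas compare coefficients in `2x C / (1 - 4x) + B = 1 / (1 - 4x)` and
`2C · 4x / (1 - 4x)^2 + 4B / (1 - 4x) = 4 / (1 - 4x)^2`. -/
lemma two_mul_sum_catalan_mul_four_pow_add_centralBinom (m : ℕ) :
    2 * ∑ p ∈ antidiagonal m, catalan p.1 * 4 ^ p.2 + (m + 1).centralBinom = 4 ^ (m + 1) := by
  induction m with
  | zero => simp [Nat.centralBinom, Nat.choose]
  | succ m ih =>
    have := centralBinom_succ_add_two_mul_catalan (m + 1)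
    rw [Nat.sum_antidiagonal_succ']
    simp only [pow_succ, ← mul_assoc, ← sum_mul] at ih ⊢
    omega

lemma two_mul_sum_catalan_mul_mul_four_pow_add (m : ℕ) :
    2 * ∑ p ∈ antidiagonal m, catalan p.1 * (p.2 * 4 ^ p.2) +
      4 * ∑ p ∈ antidiagonal m, p.1.centralBinom * 4 ^ p.2 = (m + 1) * 4 ^ (m + 1) := by
  induction m with
  | zero => simp
  | succ m ih =>
    have := two_mul_sum_catalan_mul_four_pow_add_centralBinom m
    have hshift : ∑ p ∈ antidiagonal m, catalan p.1 * ((p.2 + 1) * 4 ^ (p.2 + 1)) =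
        4 * ∑ p ∈ antidiagonal m, catalan p.1 * (p.2 * 4 ^ p.2) +
          4 * ∑ p ∈ antidiagonal m, catalan p.1 * 4 ^ p.2 := by
      rw [mul_sum, mul_sum, ← sum_add_distrib]
      exact sum_congr rfl fun _ _ => by ring
    have hshift' : ∑ p ∈ antidiagonal m, p.1.centralBinom * 4 ^ (p.2 + 1) =
        4 * ∑ p ∈ antidiagonal m, p.1.centralBinom * 4 ^ p.2 := by
      rw [mul_sum]
      exact sum_congr rfl fun _ _ => by ring
    rw [Nat.sum_antidiagonal_succ', Nat.sum_antidiagonal_succ', hshift, hshift']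
    linear_combination 4 * ih + 4 * this

namespace List

variable {α β : Type*}

def pairSum (d : α → α → ℕ) : List α → ℕ
  | [] => 0
  | a :: l => (l.map (d a)).sum + pairSum d l

lemma pairSum_append (d : α → α → ℕ) (A B : List α) :
    pairSum d (A ++ B) =
      pairSum d A + pairSum d B + (A.map fun a => (B.map (d a)).sum).sum := by
  induction A with
  | nil => simp [pairSum]
  | cons a A ih =>
    simp only [cons_append, pairSum, ih, map_append, sum_append, map_cons, sum_cons]
    omega

lemma pairSum_map {d : α → α → ℕ} {d' : β → β → ℕ} {f : β → α} {l : List β}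
    (h : ∀ a ∈ l, ∀ b ∈ l, d (f a) (f b) = d' a b) : pairSum d (l.map f) = pairSum d' l := by
  induction l with
  | nil => rfl
  | cons a l ih =>
    simp only [map_cons, pairSum, map_map, forall_mem_cons] at h ⊢
    rw [ih fun x hx y hy => h.2 x hx |>.2 y hy]
    congr 2
    exact map_congr_left fun b hb => h.1.2 b hb

lemma sum_sublistsLen_one (F : List α → ℕ) (l : List α) :
    ((l.sublistsLen 1).map F).sum = (l.map fun a => F [a]).sum := by
  rw [sublistsLen_one, map_map, map_reverse, sum_reverse]
  rfl

lemma sum_sublistsLen_two (F : List α → ℕ) (l : List α) :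
    ((l.sublistsLen 2).map F).sum = pairSum (fun a b => F [a, b]) l := by
  induction l with
  | nil => rfl
  | cons a l ih =>
    rw [sublistsLen_succ_cons, map_append, sum_append, ih, map_map,
      sum_sublistsLen_one, pairSum, add_comm]
    rfl

lemma sum_map_sum_map_add (A : List α) (B : List β) (f : α → ℕ) (g : β → ℕ) :
    (A.map fun a => (B.map fun b => f a + g b).sum).sum =
      B.length * (A.map f).sum + A.length * (B.map g).sum := by
  simp only [sum_map_add, map_const', sum_replicate, smul_eq_mul, sum_map_mul_left]

end List

namespace PlaneTree

lemma lcpLen_le_length_left : ∀ p q : List ℕ, lcpLen p q ≤ p.length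
  | [], _ | _ :: _, [] => by simp [lcpLen]
  | a :: as, b :: bs => by
    have := lcpLen_le_length_left as bs
    simp only [lcpLen, List.length_cons]
    split <;> omega

lemma lcpLen_le_length_right : ∀ p q : List ℕ, lcpLen p q ≤ q.length
  | [], _ | _ :: _, [] => by simp [lcpLen]
  | a :: as, b :: bs => by
    have := lcpLen_le_length_right as bs
    simp only [lcpLen, List.length_cons]
    split <;> omega

lemma pathDist_nil_left (q : List ℕ) : pathDist [] q = q.length := by
  cases q <;> simp [pathDist, lcpLen]

lemma pathDist_cons_cons (i : ℕ) (p q : List ℕ) : pathDist (i :: p) (i :: q) = pathDist p q := by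
  have := lcpLen_le_length_left p q
  have := lcpLen_le_length_right p q
  simp only [pathDist, lcpLen, if_pos, List.length_cons]
  omega

lemma pathDist_cons_cons_of_ne {i j : ℕ} (h : i ≠ j) (p q : List ℕ) :
    pathDist (i :: p) (j :: q) = p.length + 1 + (q.length + 1) := by
  simp [pathDist, lcpLen, h]

lemma pathDist_modifyHead_succ {p q : List ℕ} (hp : p ≠ []) (hq : q ≠ []) :
    pathDist (p.modifyHead (· + 1)) (q.modifyHead (· + 1)) = pathDist p q := by
  obtain ⟨a, p, rfl⟩ := List.exists_cons_of_ne_nil hp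
  obtain ⟨b, q, rfl⟩ := List.exists_cons_of_ne_nil hq
  simp only [List.modifyHead_cons]
  by_cases h : a = b
  · rw [h, pathDist_cons_cons, pathDist_cons_cons]
  · rw [pathDist_cons_cons_of_ne h, pathDist_cons_cons_of_ne (by omega)]

lemma pathDist_zero_cons_modifyHead_succ (p : List ℕ) {q : List ℕ} (hq : q ≠ []) :
    pathDist (0 :: p) (q.modifyHead (· + 1)) = p.length + 1 + q.length := by
  obtain ⟨b, q, rfl⟩ := List.exists_cons_of_ne_nil hq
  rw [List.modifyHead_cons, pathDist_cons_cons_of_ne (by omega), List.length_cons]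

def graft (t : PlaneTree) : PlaneTree → PlaneTree
  | node ts => node (t :: ts)

def totalDepth (T : PlaneTree) : ℕ := ((positions T).map List.length).sum

lemma one_le_size : ∀ T : PlaneTree, 1 ≤ T.size
  | node _ => by simp only [size]; omega

lemma size_graft (t : PlaneTree) : ∀ R : PlaneTree, (graft t R).size = t.size + R.size
  | node _ => by simp only [graft, size, sizeList]; omega

lemma graft_injective {t t' R R' : PlaneTree} (h : graft t R = graft t' R') : t = t' ∧ R = R' := by
  cases R; cases R'
  simp_all [graft]

lemma size_eq_one_iff : ∀ {T : PlaneTree}, T.size = 1 ↔ T = node []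
  | node [] => by simp [size, sizeList]
  | node (t :: _) => by
    have := one_le_size t
    simp only [size, sizeList, node.injEq, reduceCtorEq, iff_false]
    omega

lemma exists_graft_eq : ∀ {T : PlaneTree}, 2 ≤ T.size → ∃ t R, graft t R = T
  | node [] => by simp [size, sizeList]
  | node (t :: ts) => fun _ => ⟨t, node ts, rfl⟩

mutual
lemma length_positions : ∀ T : PlaneTree, (positions T).length = T.size
  | node ts => by
    simp only [positions, size, List.length_cons, length_positionsList 0 ts]
    omega
lemma length_positionsList : ∀ (i : ℕ) (ts : List PlaneTree),
    (positionsList i ts).length = sizeList ts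
  | _, [] => rfl
  | i, t :: ts => by
    simp only [positionsList, List.length_append, List.length_map, length_positions t,
      length_positionsList (i + 1) ts, sizeList]
end

lemma positionsList_succ (i : ℕ) (ts : List PlaneTree) :
    positionsList (i + 1) ts = (positionsList i ts).map (List.modifyHead (· + 1)) := by
  induction ts generalizing i with
  | nil => rfl
  | cons t ts ih =>
    simp only [positionsList, List.map_append, List.map_map, ih (i + 1)]
    rfl

lemma ne_nil_of_mem_positionsList {p : List ℕ} {i : ℕ} {ts : List PlaneTree}
    (h : p ∈ positionsList i ts) : p ≠ [] := by
  induction ts generalizing i with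
  | nil => simp [positionsList] at h
  | cons t ts ih =>
    simp only [positionsList, List.mem_append, List.mem_map] at h
    rcases h with ⟨q, -, rfl⟩ | h
    · exact List.cons_ne_nil _ _
    · exact ih h

lemma positions_graft (t : PlaneTree) (ts : List PlaneTree) :
    positions (graft t (node ts)) = [] :: ((positions t).map (0 :: ·) ++
      (positionsList 0 ts).map (List.modifyHead (· + 1))) := by
  simp [graft, positions, positionsList, positionsList_succ]

lemma totalDepth_graft (t : PlaneTree) :
    ∀ R : PlaneTree, (graft t R).totalDepth = t.totalDepth + t.size + R.totalDepth
  | node ts => by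
    simp only [totalDepth, positions_graft, List.map_cons, List.map_append, List.map_map,
      List.sum_cons, List.sum_append, Function.comp_def, List.length_cons, List.sum_map_add,
      List.length_modifyHead, List.map_const', List.sum_replicate, smul_eq_mul,
      length_positions, positions, List.length_nil]
    ring

lemma wiener_eq_pairSum (T : PlaneTree) : T.wiener = List.pairSum pathDist T.positions :=
  List.sum_sublistsLen_two _ _

lemma sum_map_pathDist_nil (L : List (List ℕ)) :
    (L.map (pathDist [])).sum = (L.map List.length).sum := by
  rw [show pathDist [] = List.length from funext pathDist_nil_left]

lemma sum_pathDist_zero_cons_modifyHead_succ {P L : List (List ℕ)} (hL : ∀ q ∈ L, q ≠ []) :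
    ((P.map (0 :: ·)).map fun p => ((L.map (List.modifyHead (· + 1))).map (pathDist p)).sum).sum =
      L.length * ((P.map List.length).sum + P.length) + P.length * (L.map List.length).sum := by
  simp only [List.map_map, Function.comp_def]
  calc _ = (P.map fun p => (L.map fun q => p.length + 1 + q.length).sum).sum :=
        congrArg _ <| List.map_congr_left fun p _ => congrArg _ <|
          List.map_congr_left fun q hq => pathDist_zero_cons_modifyHead_succ p (hL q hq)
    _ = _ := by
      rw [List.sum_map_sum_map_add, List.sum_map_add]
      simp

lemma wiener_graft (t : PlaneTree) : ∀ R : PlaneTree,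
    (graft t R).wiener =
      t.wiener + R.wiener + (t.totalDepth + t.size) * R.size + t.size * R.totalDepth
  | node ts => by
    rw [wiener_eq_pairSum (graft t _), positions_graft, List.pairSum, List.pairSum_append,
      List.map_append, List.sum_append, sum_map_pathDist_nil, sum_map_pathDist_nil]
    set L := positionsList 0 ts
    have hL : ∀ q ∈ L, q ≠ [] := fun _ hq => ne_nil_of_mem_positionsList hq
    have hsize : (node ts).size = L.length + 1 := by
      rw [← length_positions]; simp [positions, L]
    have hdepth : (node ts).totalDepth = (L.map List.length).sum := by
      simp [totalDepth, positions, L]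
    have hwiener : (node ts).wiener = (L.map List.length).sum + List.pairSum pathDist L := by
      rw [wiener_eq_pairSum, positions, List.pairSum, sum_map_pathDist_nil]
    have hleft : List.pairSum pathDist ((positions t).map (0 :: ·)) = t.wiener := by
      rw [wiener_eq_pairSum]
      exact List.pairSum_map fun p _ q _ => pathDist_cons_cons 0 p q
    have hright :
        List.pairSum pathDist (L.map (List.modifyHead (· + 1))) = List.pairSum pathDist L :=
      List.pairSum_map fun p hp q hq => pathDist_modifyHead_succ (hL p hp) (hL q hq)
    rw [hleft, hright, sum_pathDist_zero_cons_modifyHead_succ hL, hwiener, hsize, hdepth]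
    simp only [List.map_map, Function.comp_def, List.length_cons, List.length_modifyHead,
      List.sum_map_add, List.map_const', List.sum_replicate, smul_eq_mul, length_positions,
      totalDepth]
    ring

lemma finite_setOf_size (n : ℕ) : {T : PlaneTree | T.size = n}.Finite := by
  induction n using Nat.strong_induction_on with
  | _ n ih =>
    match n with
    | 0 => exact Set.finite_empty.subset fun T (hT : T.size = 0) =>
        (Nat.one_le_iff_ne_zero.mp (one_le_size T) hT).elim
    | 1 => simp [size_eq_one_iff]
    | m + 2 =>
      refine ((antidiagonal m).finite_toSet.biUnion fun p hp =>
          (ih (p.1 + 1) ?_).image2 graft (ih (p.2 + 1) ?_)).subset ?_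
      · have := HasAntidiagonal.mem_antidiagonal.1 hp; omega
      · have := HasAntidiagonal.mem_antidiagonal.1 hp; omega
      intro T (hT : T.size = m + 2)
      obtain ⟨t, R, rfl⟩ := exists_graft_eq (hT ▸ le_add_self)
      rw [size_graft] at hT
      have := one_le_size t
      have := one_le_size R
      simp only [Set.mem_iUnion, Set.mem_image2, mem_coe, HasAntidiagonal.mem_antidiagonal,
        Set.mem_ofPred_eq]
      exact ⟨(t.size - 1, R.size - 1), by omega, t, by omega, R, by omega, rfl⟩

noncomputable def ofSize (n : ℕ) : Finset PlaneTree := (finite_setOf_size n).toFinset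

@[simp]
lemma mem_ofSize {n : ℕ} {T : PlaneTree} : T ∈ ofSize n ↔ T.size = n :=
  Set.Finite.mem_toFinset _

lemma ofSize_zero : ofSize 0 = ∅ :=
  eq_empty_of_forall_notMem fun T h =>
    Nat.one_le_iff_ne_zero.mp (one_le_size T) (mem_ofSize.1 h)

lemma ofSize_one : ofSize 1 = {node []} := by
  ext
  simp [size_eq_one_iff]

lemma sum_ofSize_add_two {M : Type*} [AddCommMonoid M] (f : PlaneTree → M) (m : ℕ) :
    ∑ T ∈ ofSize (m + 2), f T =
      ∑ p ∈ antidiagonal m, ∑ t ∈ ofSize (p.1 + 1), ∑ R ∈ ofSize (p.2 + 1), f (graft t R) := by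
  simp_rw [← sum_product', sum_sigma']
  symm
  refine sum_bij (fun x _ => graft x.2.1 x.2.2) ?_ ?_ ?_ fun _ _ => rfl
  · rintro ⟨⟨a, b⟩, t, R⟩ hx
    simp only [mem_sigma, HasAntidiagonal.mem_antidiagonal, mem_product, mem_ofSize] at hx ⊢
    rw [size_graft]
    omega
  · rintro ⟨⟨a, b⟩, t, R⟩ hx ⟨⟨a', b'⟩, t', R'⟩ hx' h
    obtain ⟨rfl, rfl⟩ := graft_injective h
    simp only [mem_sigma, HasAntidiagonal.mem_antidiagonal, mem_product, mem_ofSize] at hx hx'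
    obtain ⟨rfl, rfl⟩ : a = a' ∧ b = b' := by omega
    rfl
  · intro T hT
    rw [mem_ofSize] at hT
    obtain ⟨t, R, rfl⟩ := exists_graft_eq (hT ▸ le_add_self)
    rw [size_graft] at hT
    have := one_le_size t
    have := one_le_size R
    exact ⟨⟨(t.size - 1, R.size - 1), t, R⟩, by simp [mem_sigma]; omega, rfl⟩

noncomputable def totalDepthSum (n : ℕ) : ℕ := ∑ T ∈ ofSize n, T.totalDepth

noncomputable def wienerSum (n : ℕ) : ℕ := ∑ T ∈ ofSize n, T.wiener

lemma card_ofSize_add_two (m : ℕ) :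
    #(ofSize (m + 2)) = ∑ p ∈ antidiagonal m, #(ofSize (p.1 + 1)) * #(ofSize (p.2 + 1)) := by
  rw [card_eq_sum_ones, sum_ofSize_add_two]
  simp

lemma card_ofSize_succ (k : ℕ) : #(ofSize (k + 1)) = catalan k := by
  induction k using Nat.strong_induction_on with
  | _ k ih =>
    match k with
    | 0 => rw [ofSize_one, card_singleton, catalan_zero]
    | m + 1 =>
      rw [card_ofSize_add_two, catalan_succ']
      refine sum_congr rfl fun p hp => ?_
      have := HasAntidiagonal.mem_antidiagonal.1 hp
      rw [ih p.1 (by omega), ih p.2 (by omega)]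

lemma totalDepthSum_add_two (m : ℕ) :
    totalDepthSum (m + 2) = ∑ p ∈ antidiagonal m,
      ((totalDepthSum (p.1 + 1) + (p.1 + 1) * catalan p.1) * catalan p.2 +
        catalan p.1 * totalDepthSum (p.2 + 1)) := by
  rw [totalDepthSum, sum_ofSize_add_two]
  refine sum_congr rfl fun p _ => ?_
  calc _ = ∑ t ∈ ofSize (p.1 + 1), ∑ R ∈ ofSize (p.2 + 1),
        (t.totalDepth + (p.1 + 1) + R.totalDepth) :=
      sum_congr rfl fun t ht => sum_congr rfl fun R _ => by
        rw [totalDepth_graft, mem_ofSize.1 ht]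
    _ = _ := by
      simp only [sum_add_distrib, sum_const, card_ofSize_succ, smul_eq_mul, totalDepthSum,
        ← mul_sum]
      ring

lemma wienerSum_add_two (m : ℕ) :
    wienerSum (m + 2) = ∑ p ∈ antidiagonal m,
      (wienerSum (p.1 + 1) * catalan p.2 + catalan p.1 * wienerSum (p.2 + 1) +
        (totalDepthSum (p.1 + 1) + (p.1 + 1) * catalan p.1) * ((p.2 + 1) * catalan p.2) +
        (p.1 + 1) * catalan p.1 * totalDepthSum (p.2 + 1)) := by
  rw [wienerSum, sum_ofSize_add_two]
  refine sum_congr rfl fun p _ => ?_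
  calc _ = ∑ t ∈ ofSize (p.1 + 1), ∑ R ∈ ofSize (p.2 + 1),
        (t.wiener + R.wiener + (t.totalDepth + (p.1 + 1)) * (p.2 + 1) +
          (p.1 + 1) * R.totalDepth) :=
      sum_congr rfl fun t ht => sum_congr rfl fun R hR => by
        rw [wiener_graft, mem_ofSize.1 ht, mem_ofSize.1 hR]
    _ = _ := by
      simp only [sum_add_distrib, sum_const, card_ofSize_succ, smul_eq_mul, totalDepthSum,
        wienerSum, ← sum_mul, ← mul_sum]
      ring

lemma two_mul_totalDepthSum_succ_add_centralBinom (k : ℕ) :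
    2 * totalDepthSum (k + 1) + k.centralBinom = 4 ^ k := by
  induction k using Nat.strong_induction_on with
  | _ k ih =>
    match k with
    | 0 => simp [totalDepthSum, ofSize_one, totalDepth, positions, positionsList]
    | m + 1 =>
      rw [totalDepthSum_add_two, ← two_mul_sum_catalan_mul_four_pow_add_centralBinom m]
      congr 2
      refine Nat.sum_antidiagonal_eq_of_add_swap fun ⟨a, b⟩ hp => ?_
      have := HasAntidiagonal.mem_antidiagonal.1 hp
      dsimp only [Prod.swap]
      rw [succ_mul_catalan_eq_centralBinom, succ_mul_catalan_eq_centralBinom,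
        ← ih a (by omega), ← ih b (by omega)]
      ring

lemma four_mul_wienerSum_succ (k : ℕ) : 4 * wienerSum (k + 1) = k * 4 ^ k := by
  induction k using Nat.strong_induction_on with
  | _ k ih =>
    match k with
    | 0 => simp [wienerSum, ofSize_one, wiener, positions, positionsList]
    | m + 1 =>
      rw [wienerSum_add_two, ← two_mul_sum_catalan_mul_mul_four_pow_add m, mul_sum, mul_sum,
        mul_sum, ← sum_add_distrib]
      refine Nat.sum_antidiagonal_eq_of_add_swap fun ⟨a, b⟩ hp => ?_
      have := HasAntidiagonal.mem_antidiagonal.1 hp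
      dsimp only [Prod.swap]
      rw [succ_mul_catalan_eq_centralBinom, succ_mul_catalan_eq_centralBinom]
      linear_combination 2 * catalan b * ih a (by omega) + 2 * catalan a * ih b (by omega) +
        4 * b.centralBinom * two_mul_totalDepthSum_succ_add_centralBinom a +
        4 * a.centralBinom * two_mul_totalDepthSum_succ_add_centralBinom b

lemma wienerSum_eq (n : ℕ) : wienerSum n = (n - 1) * 4 ^ (n - 2) := by
  match n with
  | 0 => simp [wienerSum, ofSize_zero]
  | 1 => simpa using four_mul_wienerSum_succ 0
  | k + 2 =>
    show wienerSum (k + 2) = (k + 1) * 4 ^ k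
    refine Nat.eq_of_mul_eq_mul_left (by norm_num : 0 < 4) ?_
    rw [four_mul_wienerSum_succ (k + 1)]
    ring

end PlaneTree

theorem total_wiener_index_plane_trees (n : ℕ) (hn : 2 ≤ n) :
    (∑ᶠ T : {T : PlaneTree // T.size = n}, T.1.wiener) = (n - 1) * 4 ^ (n - 2) := by
  rw [finsum_subtype_eq_finsum_cond, ← PlaneTree.wienerSum_eq]
  exact finsum_mem_eq_finite_toFinset_sum _ (PlaneTree.finite_setOf_size n)
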